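/- Any shortest augmenting path X of a matching system (G,M) contains no edge of volume larger than 2ℓ+5 and contains no vertex v with dist^α(v) > ℓ+2, where 2ℓ+1 is the length of shortest augmenting paths. -/

import Mathlib

open SimpleGraph
open scoped Classical

variable {V : Type*} [Fintype V] [DecidableEq V]

/-- A matching system `(G, M)` in which a super free vertex `f` has been added:
`U` is the set of free vertices of the original system, and for each `u ∈ U`
the vertex `mid u` forms the length-two alternating path `f - mid u - u`
(with `{f, mid u} ∉ M` and `{mid u, u} ∈ M`).  After the addition, `f` is the
unique free vertex. -/
structure Sys (V : Type*) [Fintype V] [DecidableEq V] where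
  G : SimpleGraph V
  M : Set (Sym2 V)
  f : V
  U : Set V
  mid : V → V
  M_sub : M ⊆ G.edgeSet
  matching : ∀ v : V, ∀ e₁ ∈ M, ∀ e₂ ∈ M, v ∈ e₁ → v ∈ e₂ → e₁ = e₂
  f_free : ∀ e ∈ M, f ∉ e
  others_matched : ∀ v : V, v ≠ f → ∃ e ∈ M, v ∈ e
  U_spec : ∀ u ∈ U, G.Adj f (mid u) ∧ s(f, mid u) ∉ M ∧ G.Adj (mid u) u ∧ s(mid u, u) ∈ M
  mid_deg : ∀ u ∈ U, ∀ w : V, G.Adj (mid u) w → w = f ∨ w = u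
  f_adj : ∀ w : V, G.Adj f w → ∃ u ∈ U, w = mid u
  mid_inj : ∀ u ∈ U, ∀ u' ∈ U, mid u = mid u' → u = u'

namespace Sys

variable (S : Sys V)

/-- An alternating path of the matching system: a simple path whose consecutive
edges alternate membership in `M`. -/
def IsAltPath {a b : V} (p : S.G.Walk a b) : Prop :=
  p.IsPath ∧ List.Chain' (fun e₁ e₂ => (e₁ ∈ S.M ↔ e₂ ∉ S.M)) p.edges

/-- `adist S θ u` is the length of a shortest alternating path from `f` to `u`
whose length has parity `θ` (`true` = odd, `false` = even); `⊤` if none exists. -/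
noncomputable def adist (θ : Bool) (u : V) : ℕ∞ :=
  sInf {n : ℕ∞ | ∃ p : S.G.Walk S.f u,
    S.IsAltPath p ∧ (p.length : ℕ∞) = n ∧ (Odd p.length ↔ θ = true)}

/-- The orthodox parity `α(u)` of `u`: the parity with smaller alternating distance. -/
noncomputable def op (u : V) : Bool :=
  if S.adist true u < S.adist false u then true else false

/-- The orthodox distance `dist^α(u)`. -/
noncomputable def distOrth (u : V) : ℕ∞ := S.adist (S.op u) u

/-- The unorthodox distance `dist^β(u)`. -/
noncomputable def distUnorth (u : V) : ℕ∞ := S.adist (!S.op u) u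

/-- `ρ(e)`: `true` (= odd) iff `e` is a matching edge. -/
noncomputable def rho (e : Sym2 V) : Bool := if e ∈ S.M then true else false

/-- `EP(u)`: the set of edges `e` incident to `u` such that some shortest orthodox
alternating path from `f` to `u` terminates with `e`. -/
def EP (u : V) : Set (Sym2 V) :=
  {e | ∃ p : S.G.Walk S.f u, S.IsAltPath p ∧ (p.length : ℕ∞) = S.distOrth u ∧
        p.edges.getLast? = some e}

/-- `P(u)`: the set of immediate predecessors of `u` on shortest orthodox
alternating paths. -/
def Pset (u : V) : Set V := {u' | s(u', u) ∈ S.EP u}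

/-- `EP = ⋃_u EP(u)`. -/
def EPall : Set (Sym2 V) := ⋃ u : V, S.EP u

/-- The volume `vlevel(e) = dist^{ρ(e)}(y) + dist^{ρ(e)}(z) + 1` of an edge `e = {y,z}`. -/
noncomputable def vlevel (e : Sym2 V) : ℕ∞ :=
  Sym2.lift ⟨fun y z => S.adist (S.rho e) y + S.adist (S.rho e) z + 1,
    fun y z => by ring⟩ e

/-- The height `hlevel(e) = max (dist^{ρ(e)}(y)) (dist^{ρ(e)}(z))` of an edge `e = {y,z}`. -/
noncomputable def hlevel (e : Sym2 V) : ℕ∞ :=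
  Sym2.lift ⟨fun y z => max (S.adist (S.rho e) y) (S.adist (S.rho e) z),
    fun y z => max_comm _ _⟩ e

/-- The level `level(e) = n' · vlevel(e) + hlevel(e)` with `n' = |V| + 1 > |V|`,
giving the lexicographic order on (volume, height). -/
noncomputable def level (e : Sym2 V) : ℕ∞ :=
  ((Fintype.card V + 1 : ℕ) : ℕ∞) * S.vlevel e + S.hlevel e

/-- An augmenting path: an alternating path connecting two distinct vertices of `U`,
starting and ending with non-matching edges. -/
def IsAugPath {a b : V} (p : S.G.Walk a b) : Prop :=
  S.IsAltPath p ∧ a ∈ S.U ∧ b ∈ S.U ∧ a ≠ b ∧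
  (∀ e, p.edges.head? = some e → e ∉ S.M) ∧ (∀ e, p.edges.getLast? = some e → e ∉ S.M)

/-- The length of shortest augmenting paths of the system is `L`. -/
def ShortestAugLen (L : ℕ) : Prop :=
  (∃ a b : V, ∃ p : S.G.Walk a b, S.IsAugPath p ∧ p.length = L) ∧
  (∀ a b : V, ∀ p : S.G.Walk a b, S.IsAugPath p → L ≤ p.length)

/-- Vertices of the alternating base DAG `H`: all vertices except `f` and its neighbors. -/
def inH (v : V) : Prop := v ≠ S.f ∧ ¬ S.G.Adj S.f v

/-- The edge relation of the alternating base DAG `H`: an edge from `u` to `v`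
iff `v ∈ P(u)` (upward orientation); vertices of `U` are sinks. -/
def HStep (u v : V) : Prop := S.inH u ∧ S.inH v ∧ u ∉ S.U ∧ v ∈ S.Pset u

end Sys

/-- An alternating base tree of `S`: every non-root vertex has its parent chosen
from `P(u)`; the root is the super free vertex `f`. -/
structure ABT (S : Sys V) where
  par : V → V
  par_f : par S.f = S.f
  par_mem : ∀ u : V, u ≠ S.f → par u ∈ S.Pset u

namespace ABT

variable {S : Sys V} (T : ABT S)

/-- `v` belongs to the subtree `T(t)` rooted at `t`. -/
def inSub (t v : V) : Prop := ∃ n : ℕ, T.par^[n] v = t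

/-- `e` is a tree edge of `T`. -/
def IsTreeEdge (e : Sym2 V) : Prop := ∃ u : V, u ≠ S.f ∧ e = s(u, T.par u)

/-- `e` is an incoming edge of the subtree `T(t)`: a non-tree edge of `G` with
exactly one endpoint inside `T(t)`. -/
def Incoming (t : V) (e : Sym2 V) : Prop :=
  e ∈ S.G.edgeSet ∧ ¬ T.IsTreeEdge e ∧
  ∃ y z : V, e = s(y, z) ∧ T.inSub t z ∧ ¬ T.inSub t y

/-- `e` is a minimum-level incoming edge (MIE) of `T(t)`. -/
def IsMIE (t : V) (e : Sym2 V) : Prop :=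
  T.Incoming t e ∧ ∀ e', T.Incoming t e' → S.level e ≤ S.level e'

/-- `e` is a minimum-volume incoming edge of `T(t)`. -/
def IsMinVolIncoming (t : V) (e : Sym2 V) : Prop :=
  T.Incoming t e ∧ ∀ e', T.Incoming t e' → S.vlevel e ≤ S.vlevel e'

/-- The level of a path w.r.t. `T`: the maximum level of its non-tree edges
(`0` if it contains none). -/
noncomputable def pathLevel {a b : V} (p : S.G.Walk a b) : ℕ∞ :=
  sSup {x : ℕ∞ | ∃ e ∈ p.edges, ¬ T.IsTreeEdge e ∧ x = S.level e}

/-- The volume of a path w.r.t. `T`: the maximum volume of its non-tree edges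
(`0` if it contains none). -/
noncomputable def pathVlevel {a b : V} (p : S.G.Walk a b) : ℕ∞ :=
  sSup {x : ℕ∞ | ∃ e ∈ p.edges, ¬ T.IsTreeEdge e ∧ x = S.vlevel e}

end ABT

/-- An edge is crossable if its volume is `2ℓ+5` and some alternating base tree
puts its endpoints into subtrees rooted at two distinct free vertices. -/
def Sys.Crossable (S : Sys V) (ℓ : ℕ) (e : Sym2 V) : Prop :=
  S.vlevel e = ((2 * ℓ + 5 : ℕ) : ℕ∞) ∧
  ∃ T : ABT S, ∃ y z : V, e = s(y, z) ∧
    ∃ uy ∈ S.U, ∃ uz ∈ S.U, uy ≠ uz ∧ T.inSub uy y ∧ T.inSub uz z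

/-- `E*`: the set of crossable critical edges (crossable and not in `EP`). -/
def Sys.Estar (S : Sys V) (ℓ : ℕ) : Set (Sym2 V) :=
  {e | S.Crossable ℓ e ∧ e ∉ S.EPall}

/-- A (directed) path in the alternating base DAG `H`. -/
structure HPath (S : Sys V) where
  verts : List V
  ne : verts ≠ []
  chain : verts.Chain' S.HStep
  mem : ∀ v ∈ verts, S.inH v
  nodup : verts.Nodup

/-- The first vertex of an `H`-path. -/
def HPath.first {S : Sys V} (P : HPath S) : V := P.verts.head P.ne

/-- The last vertex of an `H`-path. -/
def HPath.last {S : Sys V} (P : HPath S) : V := P.verts.getLast P.ne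

/-- A double path `(P, Q, y, z)`: `{y,z} ∈ E*` and `P`, `Q` are vertex-disjoint
paths of `H` from `y` and `z` terminating at two distinct free vertices. -/
structure DoublePath (S : Sys V) (ℓ : ℕ) where
  P : HPath S
  Q : HPath S
  y : V
  z : V
  hy : P.first = y
  hz : Q.first = z
  he : s(y, z) ∈ S.Estar ℓ
  hPU : P.last ∈ S.U
  hQU : Q.last ∈ S.U
  hne : P.last ≠ Q.last
  hdisj : ∀ v ∈ P.verts, v ∉ Q.verts

/-- `T` respects an `H`-path `P` if consecutive vertices of `P` are
child–parent pairs of `T`. -/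
def ABT.RespectsPath {S : Sys V} (T : ABT S) (P : HPath S) : Prop :=
  P.verts.Chain' (fun u v => T.par u = v)

/-- `T` respects a double path if it respects both of its constituent paths. -/
def ABT.RespectsDP {S : Sys V} {ℓ : ℕ} (T : ABT S) (D : DoublePath S ℓ) : Prop :=
  T.RespectsPath D.P ∧ T.RespectsPath D.Q

/-- An in-tree of `H` rooted at a free vertex: every non-root vertex has a unique
outgoing `H`-edge inside the tree and all vertices reach the root.  (Paths ending
at a free vertex are a special case.) -/
structure InTree (S : Sys V) where
  W : Set V
  root : V
  g : V → V
  root_W : root ∈ W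
  root_U : root ∈ S.U
  step : ∀ v ∈ W, v ≠ root → S.HStep v (g v) ∧ g v ∈ W
  reach : ∀ v ∈ W, ∃ n : ℕ, g^[n] v = root


/-!
Prefixing a path `a ⋯ v` of an augmenting path with the length-two alternating path
`f - mid a - a` gives an alternating path from `f` to `v` of the same parity, and the
same holds for suffixes `v ⋯ b` read backwards; this is legitimate because an augmenting
path avoids `f` (which is free) and `mid a`, `mid b` (whose only neighbours are `f` and
`a`, resp. `b`).  So every vertex at position `i` of an augmenting path of length `L`
has `dist^α ≤ min i (L - i) + 2`, and an edge at position `i` has volume at most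
`(i + 2) + (L - 1 - i + 2) + 1 = L + 4`, the parity of `i` being exactly `ρ` of that edge.
-/

theorem List.mem_iff_odd_of_isChain {α : Type*} {P : α → Prop} {l₁ l₂ : List α} {x : α}
    (hc : (l₁ ++ x :: l₂).IsChain (fun a b => (P a ↔ ¬ P b)))
    (h₀ : ∀ y ∈ (l₁ ++ x :: l₂).head?, ¬ P y) :
    P x ↔ Odd l₁.length := by
  induction l₁ using List.reverseRecOn generalizing x l₂ with
  | nil => simpa using h₀
  | append_singleton l₀ w ih =>
    rw [List.append_assoc, List.singleton_append] at hc h₀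
    have hw := ih hc h₀
    rw [List.isChain_append_cons_cons] at hc
    rw [List.length_append, List.length_singleton, Nat.odd_add_one]
    tauto

theorem SimpleGraph.Walk.exists_eq_append_cons_of_mem_edges {α : Type*} {G : SimpleGraph α}
    {a b : α} {X : G.Walk a b} {e : Sym2 α} (he : e ∈ X.edges) :
    ∃ (y z : α) (h : G.Adj y z) (p : G.Walk a y) (q : G.Walk z b),
      X = p.append (Walk.cons h q) ∧ e = s(y, z) := by
  induction X with
  | nil => simp at he
  | @cons u c d h rest ih =>
    rcases List.mem_cons.mp he with rfl | he
    · exact ⟨u, c, h, Walk.nil, rest, rfl, rfl⟩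
    · obtain ⟨y, z, h', p, q, rfl, rfl⟩ := ih he
      exact ⟨y, z, h', Walk.cons h p, q, rfl, rfl⟩

namespace Sys

variable {S : Sys V}

theorem distOrth_le_adist (θ : Bool) (v : V) : S.distOrth v ≤ S.adist θ v := by
  unfold distOrth op
  split_ifs with h <;> cases θ
  exacts [h.le, le_rfl, le_rfl, not_lt.mp h]

theorem f_ne_of_mem_U {u : V} (hu : u ∈ S.U) : S.f ≠ u := by
  rintro rfl
  exact S.f_free _ (S.U_spec _ hu).2.2.2 (Sym2.mem_mk_right _ _)

theorem IsAltPath.reverse {u v : V} {p : S.G.Walk u v} (hp : S.IsAltPath p) :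
    S.IsAltPath p.reverse :=
  ⟨hp.1.reverse, by
    rw [Walk.edges_reverse]
    exact List.isChain_reverse.mpr (List.IsChain.imp (fun _ _ h => by tauto) hp.2)⟩

theorem IsAltPath.of_append_left {u v w : V} {p : S.G.Walk u v} {q : S.G.Walk v w}
    (h : S.IsAltPath (p.append q)) : S.IsAltPath p :=
  ⟨h.1.of_append_left, List.IsChain.prefix (l := (p.append q).edges) h.2
    ⟨q.edges, (Walk.edges_append p q).symm⟩⟩

theorem IsAltPath.cons {u v w : V} (h : S.G.Adj u v) {p : S.G.Walk v w}
    (hp : S.IsAltPath p) (hu : u ∉ p.support)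
    (halt : ∀ e ∈ p.edges.head?, (s(u, v) ∈ S.M ↔ e ∉ S.M)) :
    S.IsAltPath (Walk.cons h p) :=
  ⟨hp.1.cons hu, List.isChain_cons.mpr ⟨halt, hp.2⟩⟩

theorem IsAltPath.exists_mem_M_of_append {u v w : V} {p : S.G.Walk u v} {q : S.G.Walk v w}
    (h : S.IsAltPath (p.append q)) (hu : u ≠ v) (hw : v ≠ w) : ∃ e ∈ S.M, v ∈ e := by
  obtain ⟨x, _, r, hr⟩ := Walk.exists_eq_cons_of_ne hu.symm p.reverse
  obtain ⟨y, _, s, hs⟩ := Walk.exists_eq_cons_of_ne hw q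
  have hlast : p.edges.getLast? = some s(v, x) := by
    rw [← List.head?_reverse, ← Walk.edges_reverse, hr]
    rfl
  have hchain := h.2
  rw [Walk.edges_append, hs] at hchain
  have hrel := (List.isChain_append.mp hchain).2.2 _ hlast s(v, y) rfl
  by_cases hM : s(v, x) ∈ S.M
  · exact ⟨_, hM, Sym2.mem_mk_left _ _⟩
  · exact ⟨s(v, y), by tauto, Sym2.mem_mk_left _ _⟩

theorem IsAugPath.reverse {a b : V} {X : S.G.Walk a b} (hX : S.IsAugPath X) :
    S.IsAugPath X.reverse := by
  obtain ⟨hAlt, ha, hb, hab, hhead, hlast⟩ := hX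
  refine ⟨hAlt.reverse, hb, ha, hab.symm, fun e he => hlast e ?_, fun e he => hhead e ?_⟩
  · rwa [Walk.edges_reverse, List.head?_reverse] at he
  · rwa [Walk.edges_reverse, List.getLast?_reverse] at he

theorem IsAugPath.f_not_mem_support {a b : V} {X : S.G.Walk a b} (hX : S.IsAugPath X) :
    S.f ∉ X.support := by
  intro hf
  have hAlt : S.IsAltPath ((X.takeUntil S.f hf).append (X.dropUntil S.f hf)) := by
    rw [X.take_spec hf]
    exact hX.1
  obtain ⟨e, he, hfe⟩ := hAlt.exists_mem_M_of_append (S.f_ne_of_mem_U hX.2.1).symm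
    (S.f_ne_of_mem_U hX.2.2.1)
  exact S.f_free e he hfe

theorem IsAugPath.mid_not_mem_support {a b : V} {X : S.G.Walk a b} (hX : S.IsAugPath X) :
    S.mid a ∉ X.support := by
  intro hm
  obtain ⟨-, -, hma, hmaM⟩ := S.U_spec a hX.2.1
  set p := X.takeUntil (S.mid a) hm
  have hX' : S.IsAugPath (p.append (X.dropUntil (S.mid a) hm)) := by
    rw [X.take_spec hm]
    exact hX
  obtain ⟨w, hw, r, hr⟩ := Walk.exists_eq_cons_of_ne hma.ne p.reverse
  rcases S.mid_deg a hX.2.1 w hw with rfl | hwa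
  · -- the walk back from `mid a` towards `a` would have to pass through `f`
    apply hX.f_not_mem_support
    apply X.support_takeUntil_subset_support hm
    rw [← List.mem_reverse, ← Walk.support_reverse, hr]
    exact List.mem_cons_of_mem _ r.start_mem_support
  · -- otherwise `X` starts with the matching edge `{a, mid a}`
    subst w
    have hr_nil : r = Walk.nil :=
      (Walk.isPath_iff_nil.mp (hr ▸ hX'.1.of_append_left.reverse.1).of_cons).eq_nil
    have hp : p.edges = [s(a, S.mid a)] := by
      rw [← List.reverse_reverse p.edges, ← Walk.edges_reverse, hr, hr_nil, Sym2.eq_swap]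
      rfl
    refine hX'.2.2.2.2.1 s(a, S.mid a) ?_ (Sym2.eq_swap ▸ hmaM)
    rw [Walk.edges_append, hp]
    rfl

theorem IsAugPath.adist_le_of_append {a v b : V} {p : S.G.Walk a v} {q : S.G.Walk v b}
    (hX : S.IsAugPath (p.append q)) :
    S.adist (decide (Odd p.length)) v ≤ (p.length + 2 : ℕ) := by
  obtain ⟨hfm, hfmM, hma, hmaM⟩ := S.U_spec a hX.2.1
  have hf : S.f ∉ p.support := fun h =>
    hX.f_not_mem_support (Walk.support_subset_support_append_left p q h)
  have hm : S.mid a ∉ p.support := fun h =>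
    hX.mid_not_mem_support (Walk.support_subset_support_append_left p q h)
  have hpAlt : S.IsAltPath (Walk.cons hma p) := by
    refine hX.1.of_append_left.cons hma hm fun e he => iff_of_true hmaM (hX.2.2.2.2.1 e ?_)
    rw [Walk.edges_append, List.head?_append, Option.mem_def.mp he]
    rfl
  have hW : S.IsAltPath (Walk.cons hfm (Walk.cons hma p)) := by
    refine hpAlt.cons hfm ?_ fun e he => ?_
    · rw [Walk.support_cons, List.mem_cons, not_or]
      exact ⟨hfm.ne, hf⟩
    · obtain rfl : e = s(S.mid a, a) := by simpa using he.symm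
      exact iff_of_false hfmM (not_not.mpr hmaM)
  calc S.adist (decide (Odd p.length)) v
      = S.adist (decide (Odd (Walk.cons hfm (Walk.cons hma p)).length)) v := by
        simp [Nat.odd_add_one]
    _ ≤ (Walk.cons hfm (Walk.cons hma p)).length :=
        sInf_le ⟨_, hW, rfl, decide_eq_true_iff.symm⟩
    _ = (p.length + 2 : ℕ) := rfl

theorem IsAugPath.adist_le_of_append_right {a v b : V} {p : S.G.Walk a v}
    {q : S.G.Walk v b} (hX : S.IsAugPath (p.append q)) :
    S.adist (decide (Odd q.length)) v ≤ (q.length + 2 : ℕ) := by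
  have hX' := hX.reverse
  rw [Walk.reverse_append] at hX'
  simpa using hX'.adist_le_of_append

theorem IsAugPath.mem_M_iff_odd {a y z b : V} {p : S.G.Walk a y} {h : S.G.Adj y z}
    {q : S.G.Walk z b} (hX : S.IsAugPath (p.append (Walk.cons h q))) :
    s(y, z) ∈ S.M ↔ Odd p.length := by
  have hchain := hX.1.2
  have hhead := hX.2.2.2.2.1
  rw [Walk.edges_append, Walk.edges_cons] at hchain hhead
  rw [← Walk.length_edges]
  exact List.mem_iff_odd_of_isChain hchain hhead

theorem IsAugPath.vlevel_le {a b : V} {X : S.G.Walk a b} (hX : S.IsAugPath X)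
    {e : Sym2 V} (he : e ∈ X.edges) : S.vlevel e ≤ (X.length + 4 : ℕ) := by
  obtain ⟨y, z, h, p, q, rfl, rfl⟩ := Walk.exists_eq_append_cons_of_mem_edges he
  have hX' : S.IsAugPath ((p.concat h).append q) := by rwa [Walk.concat_append]
  have hXrev : S.IsAugPath (q.reverse.append (Walk.cons h.symm p.reverse)) := by
    have hXr := hX.reverse
    rwa [Walk.reverse_append, Walk.reverse_cons, ← Walk.append_assoc, Walk.cons_append,
      Walk.nil_append] at hXr
  have hrho_p : S.rho s(y, z) = decide (Odd p.length) := by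
    simp [rho, hX.mem_M_iff_odd]
  have hrho_q : S.rho s(y, z) = decide (Odd q.length) := by
    have hq := hXrev.mem_M_iff_odd
    rw [Sym2.eq_swap, Walk.length_reverse] at hq
    simp [rho, hq]
  calc S.vlevel s(y, z)
      = S.adist (S.rho s(y, z)) y + S.adist (S.rho s(y, z)) z + 1 := rfl
    _ ≤ (p.length + 2 : ℕ) + (q.length + 2 : ℕ) + 1 := by
        gcongr
        · exact hrho_p ▸ hX.adist_le_of_append
        · exact hrho_q ▸ hX'.adist_le_of_append_right
    _ = ((p.append (Walk.cons h q)).length + 4 : ℕ) := by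
        simp only [Walk.length_append, Walk.length_cons]
        push_cast
        ring

theorem IsAugPath.distOrth_le {a b : V} {X : S.G.Walk a b} (hX : S.IsAugPath X)
    {v : V} (hv : v ∈ X.support) : S.distOrth v ≤ (X.length / 2 + 2 : ℕ) := by
  have hX' : S.IsAugPath ((X.takeUntil v hv).append (X.dropUntil v hv)) := by
    rwa [X.take_spec hv]
  have hlen := congrArg Walk.length (X.take_spec hv)
  rw [Walk.length_append] at hlen
  rcases le_total (X.takeUntil v hv).length (X.dropUntil v hv).length with h | h
  · refine (distOrth_le_adist _ v).trans (hX'.adist_le_of_append.trans ?_)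
    exact Nat.cast_le.mpr (by omega)
  · refine (distOrth_le_adist _ v).trans (hX'.adist_le_of_append_right.trans ?_)
    exact Nat.cast_le.mpr (by omega)

end Sys

theorem stmt12_general (S : Sys V) (ℓ : ℕ)
    {a b : V} (X : S.G.Walk a b) (hX : S.IsAugPath X) (hlen : X.length = 2 * ℓ + 1) :
    (∀ e ∈ X.edges, S.vlevel e ≤ ((2 * ℓ + 5 : ℕ) : ℕ∞)) ∧
    (∀ v ∈ X.support, S.distOrth v ≤ ((ℓ + 2 : ℕ) : ℕ∞)) := by
  refine ⟨fun e he => (hX.vlevel_le he).trans_eq ?_,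
    fun v hv => (hX.distOrth_le hv).trans_eq ?_⟩
  · rw [hlen]
  · rw [hlen]
    congr 1
    omega

/-- Any shortest augmenting path `X` (of length `2ℓ+1`) contains no edge of volume
larger than `2ℓ+5`, and no vertex `v` with `dist^α(v) > ℓ+2`. -/
theorem stmt12 (S : Sys V) (ℓ : ℕ) (hl : S.ShortestAugLen (2 * ℓ + 1))
    {a b : V} (X : S.G.Walk a b) (hX : S.IsAugPath X) (hlen : X.length = 2 * ℓ + 1) :
    (∀ e ∈ X.edges, S.vlevel e ≤ ((2 * ℓ + 5 : ℕ) : ℕ∞)) ∧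
    (∀ v ∈ X.support, S.distOrth v ≤ ((ℓ + 2 : ℕ) : ℕ∞)) :=
  stmt12_general S ℓ X hX hlen
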